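/- Let X be a cocompact G-cell complex with trivial first homology over ℤ and fine 1-skeleton, where G-stabilizers of 1-cells are finite. Then FV_{X,ℤ}(k) < ∞ for every integer k. -/

import Mathlib

open Finsupp

/-- A (combinatorial, oriented) graph: the 1-skeleton data of a complex. -/
structure CGraph where
  V : Type
  E : Type
  ends : E → V × V

/-- ℓ¹-norm of an integral chain. -/
def l1Z {α : Type} (c : α →₀ ℤ) : ℕ := c.sum fun _ v => v.natAbs

/-- Two chains are disjoint if no basis element has nonzero coefficient in both. -/
def DisjointChains {α : Type} (a b : α →₀ ℤ) : Prop := ∀ x, a x = 0 ∨ b x = 0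

namespace CGraph

variable (Γ : CGraph)

/-- Source vertex of a directed edge (an edge with an orientation bit). -/
def src (p : Γ.E × Bool) : Γ.V := if p.2 then (Γ.ends p.1).1 else (Γ.ends p.1).2

/-- Target vertex of a directed edge. -/
def tgt (p : Γ.E × Bool) : Γ.V := if p.2 then (Γ.ends p.1).2 else (Γ.ends p.1).1

/-- A nonempty cyclically-consecutive list of directed edges. -/
def IsClosedPath (l : List (Γ.E × Bool)) : Prop :=
  l ≠ [] ∧ ∀ i : Fin l.length,
    Γ.tgt (l.get i) = Γ.src (l.get ⟨(↑i + 1) % l.length, Nat.mod_lt _ i.pos⟩)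

/-- A circuit: a simple closed combinatorial path (no repeated edges or vertices). -/
def IsCircuit (l : List (Γ.E × Bool)) : Prop :=
  Γ.IsClosedPath l ∧ (l.map Prod.fst).Nodup ∧ (l.map Γ.src).Nodup

/-- The 1-cycle induced by a closed path: coefficient ±1 on each traversed edge. -/
noncomputable def pathCycle (l : List (Γ.E × Bool)) : Γ.E →₀ ℤ :=
  (l.map fun p => Finsupp.single p.1 (if p.2 then (1 : ℤ) else -1)).sum

/-- The simplicial boundary map `C₁ → C₀`. -/
noncomputable def d1 (γ : Γ.E →₀ ℤ) : Γ.V →₀ ℤ :=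
  γ.sum fun e c => c • (Finsupp.single (Γ.ends e).2 (1 : ℤ) - Finsupp.single (Γ.ends e).1 1)

/-- A 1-chain is a cycle if its boundary vanishes. -/
def IsCycle (γ : Γ.E →₀ ℤ) : Prop := Γ.d1 γ = 0

/-- A graph is fine if each edge lies in only finitely many circuits of each bounded length. -/
def Fine : Prop :=
  ∀ (e : Γ.E) (L : ℕ),
    {l : List (Γ.E × Bool) | Γ.IsCircuit l ∧ e ∈ l.map Prod.fst ∧ l.length ≤ L}.Finite

/-- Walks from `u` to `v`. -/
def IsWalk : List (Γ.E × Bool) → Γ.V → Γ.V → Prop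
  | [], u, v => u = v
  | p :: l, u, v => Γ.src p = u ∧ IsWalk l (Γ.tgt p) v

/-- Combinatorial distance in a graph (∞ if there is no walk). -/
noncomputable def gdist (u v : Γ.V) : ℕ∞ :=
  ⨅ l ∈ {l : List (Γ.E × Bool) | Γ.IsWalk l u v}, (l.length : ℕ∞)

def Connected : Prop := ∀ u v : Γ.V, Γ.gdist u v < ⊤

/-- Gromov hyperbolicity via the four-point condition. -/
def Hyperbolic : Prop :=
  ∃ δ : ℕ, ∀ x y z w : Γ.V,
    Γ.gdist x y + Γ.gdist z w ≤
      max (Γ.gdist x z + Γ.gdist y w) (Γ.gdist x w + Γ.gdist y z) + (δ : ℕ∞)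

end CGraph

/-- A combinatorial 2-complex: a graph together with a set of 2-cells, each with a
boundary 1-chain. -/
structure TwoComplex extends CGraph where
  F : Type
  fb : F → E →₀ ℤ

namespace TwoComplex

variable (X : TwoComplex)

/-- The boundary map `C₂ → C₁` over ℤ. -/
noncomputable def d2 (μ : X.F →₀ ℤ) : X.E →₀ ℤ := μ.sum fun f c => c • X.fb f

/-- The filling norm `‖γ‖_∂` over ℤ (∞ if `γ` bounds no 2-chain). -/
noncomputable def fillNorm (γ : X.E →₀ ℤ) : ℕ∞ :=
  ⨅ μ ∈ {μ : X.F →₀ ℤ | X.d2 μ = γ}, (l1Z μ : ℕ∞)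

/-- The homological Dehn function of `X` over ℤ. -/
noncomputable def FV (k : ℕ) : ℕ∞ :=
  ⨆ γ ∈ {γ : X.E →₀ ℤ | X.toCGraph.IsCycle γ ∧ l1Z γ ≤ k}, X.fillNorm γ

end TwoComplex

/-- A cellular action of a group `G` on a 2-complex `X`: `G` permutes the cells of each
dimension, compatibly with endpoints and boundaries. -/
structure ComplexAction (G : Type) [Group G] (X : TwoComplex) where
  vMap : G → X.V ≃ X.V
  eMap : G → X.E ≃ X.E
  fMap : G → X.F ≃ X.F
  vMap_mul : ∀ g h v, vMap (g * h) v = vMap g (vMap h v)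
  eMap_mul : ∀ g h e, eMap (g * h) e = eMap g (eMap h e)
  fMap_mul : ∀ g h f, fMap (g * h) f = fMap g (fMap h f)
  ends_eq : ∀ g e, X.ends (eMap g e) = (vMap g (X.ends e).1, vMap g (X.ends e).2)
  fb_eq : ∀ g f, X.fb (fMap g f) = (X.fb f).mapDomain (eMap g)

/-- The action is cocompact: finitely many orbits of cells in each dimension. -/
def ComplexAction.Cocompact {G : Type} [Group G] {X : TwoComplex}
    (A : ComplexAction G X) : Prop :=
  (∃ s : Set X.V, s.Finite ∧ ∀ v, ∃ g, A.vMap g v ∈ s) ∧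
  (∃ s : Set X.E, s.Finite ∧ ∀ e, ∃ g, A.eMap g e ∈ s) ∧
  (∃ s : Set X.F, s.Finite ∧ ∀ f, ∃ g, A.fMap g f ∈ s)

/-!
Fix `k`. By cocompactness every edge can be translated into a finite set `s`, and by fineness
only finitely many circuits of length `≤ k` meet `s`; filling each of them once gives a bound `N`
which, by equivariance, works for every circuit of length `≤ k`. A nonzero integral cycle `γ`
contains a circuit along which it flows positively (follow positive edges until a vertex
repeats), and subtracting that circuit lowers `‖γ‖₁` by the circuit's length. Peeling off
circuits one at a time fills `γ` by a chain of norm at most `‖γ‖₁ · N ≤ k · N`.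
-/

lemma Function.exists_mem_periodicPts {α : Type} [Finite α] [Nonempty α] (f : α → α) :
    ∃ x, x ∈ Function.periodicPts f := by
  obtain ⟨a, b, hne, heq⟩ :=
    Finite.exists_ne_map_eq_of_infinite fun n : ℕ => f^[n] (Classical.arbitrary α)
  obtain ⟨a, b, hab, heq⟩ : ∃ a b : ℕ, a < b ∧
      f^[a] (Classical.arbitrary α) = f^[b] (Classical.arbitrary α) := by
    rcases hne.lt_or_gt with h | h
    exacts [⟨a, b, h, heq⟩, ⟨b, a, h, heq.symm⟩]
  refine ⟨f^[a] (Classical.arbitrary α), b - a, Nat.sub_pos_of_lt hab, ?_⟩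
  rw [Function.IsPeriodicPt, Function.IsFixedPt, ← Function.iterate_add_apply,
    Nat.sub_add_cancel hab.le, heq]

lemma val_finRotate_eq_mod {n : ℕ} (i : Fin n) : (finRotate n i : ℕ) = (i + 1) % n := by
  have := i.neZero
  rw [finRotate_apply, Fin.val_add, Fin.val_one', Nat.add_mod_mod]

section L1Norm

variable {α : Type}

lemma l1Z_eq_sum_of_support_subset (c : α →₀ ℤ) {s : Finset α} (hs : c.support ⊆ s) :
    l1Z c = ∑ x ∈ s, (c x).natAbs :=
  Finsupp.sum_of_support_subset c hs _ fun _ _ => rfl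

@[simp]
lemma l1Z_zero : l1Z (0 : α →₀ ℤ) = 0 := Finsupp.sum_zero_index

lemma l1Z_add_le (a b : α →₀ ℤ) : l1Z (a + b) ≤ l1Z a + l1Z b := by
  classical
  rw [l1Z_eq_sum_of_support_subset (a + b) (support_add (g₁ := a) (g₂ := b)),
    l1Z_eq_sum_of_support_subset a Finset.subset_union_left,
    l1Z_eq_sum_of_support_subset b Finset.subset_union_right, ← Finset.sum_add_distrib]
  exact Finset.sum_le_sum fun x _ => Int.natAbs_add_le _ _

lemma l1Z_add_of_natAbs_add {a b : α →₀ ℤ}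
    (h : ∀ x, ((a + b) x).natAbs = (a x).natAbs + (b x).natAbs) :
    l1Z (a + b) = l1Z a + l1Z b := by
  classical
  rw [l1Z_eq_sum_of_support_subset (a + b) (support_add (g₁ := a) (g₂ := b)),
    l1Z_eq_sum_of_support_subset a Finset.subset_union_left,
    l1Z_eq_sum_of_support_subset b Finset.subset_union_right, ← Finset.sum_add_distrib]
  exact Finset.sum_congr rfl fun x _ => h x

lemma l1Z_mapDomain {β : Type} {f : α → β} (hf : Function.Injective f) (c : α →₀ ℤ) :
    l1Z (c.mapDomain f) = l1Z c :=
  sum_mapDomain_index_inj hf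

end L1Norm

namespace CGraph

variable {Γ : CGraph}

lemma d1_eq_linearCombination (γ : Γ.E →₀ ℤ) :
    Γ.d1 γ = linearCombination ℤ (fun e => single (Γ.ends e).2 1 - single (Γ.ends e).1 1) γ :=
  (linearCombination_apply ℤ γ).symm

lemma d1_sub (a b : Γ.E →₀ ℤ) : Γ.d1 (a - b) = Γ.d1 a - Γ.d1 b := by
  simp only [d1_eq_linearCombination, map_sub]

lemma d1_single_sign (p : Γ.E × Bool) :
    Γ.d1 (single p.1 (if p.2 then 1 else -1)) = single (Γ.tgt p) 1 - single (Γ.src p) 1 := by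
  obtain ⟨e, _ | _⟩ := p <;> simp [d1_eq_linearCombination, src, tgt]

lemma IsClosedPath.tgt_eq_src_finRotate {l : List (Γ.E × Bool)} (hl : Γ.IsClosedPath l)
    (i : Fin l.length) : Γ.tgt l[i.1] = Γ.src l[(finRotate _ i).1] := by
  simpa only [List.get_eq_getElem, val_finRotate_eq_mod] using hl.2 i

lemma isCycle_pathCycle {l : List (Γ.E × Bool)} (hl : Γ.IsClosedPath l) :
    Γ.IsCycle (Γ.pathCycle l) := by
  have hsum : ∑ i : Fin l.length, single (Γ.tgt l[i.1]) (1 : ℤ) =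
      ∑ i : Fin l.length, single (Γ.src l[i.1]) 1 := by
    simp_rw [hl.tgt_eq_src_finRotate]
    exact Equiv.sum_comp (finRotate _) fun i => single (Γ.src l[i.1]) 1
  rw [IsCycle, pathCycle, d1_eq_linearCombination, map_list_sum, List.map_map]
  simp only [Function.comp_def, ← d1_eq_linearCombination, d1_single_sign]
  rw [← Fin.sum_univ_fun_getElem, Finset.sum_sub_distrib, hsum, sub_self]

lemma pathCycle_cons (p : Γ.E × Bool) (l : List (Γ.E × Bool)) :
    Γ.pathCycle (p :: l) = single p.1 (if p.2 then 1 else -1) + Γ.pathCycle l := by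
  simp [pathCycle]

lemma pathCycle_apply_of_notMem {l : List (Γ.E × Bool)} {e : Γ.E} (he : e ∉ l.map Prod.fst) :
    Γ.pathCycle l e = 0 := by
  induction l with
  | nil => rfl
  | cons p l ih =>
    simp only [List.map_cons, List.mem_cons, not_or] at he
    simp [pathCycle_cons, ih he.2, Ne.symm he.1]

lemma pathCycle_apply_of_mem {l : List (Γ.E × Bool)} (hl : (l.map Prod.fst).Nodup)
    {p : Γ.E × Bool} (hp : p ∈ l) : Γ.pathCycle l p.1 = if p.2 then 1 else -1 := by
  induction l with
  | nil => simp at hp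
  | cons q l ih =>
    rw [List.map_cons, List.nodup_cons] at hl
    rcases List.mem_cons.1 hp with rfl | hp
    · simp [pathCycle_cons, pathCycle_apply_of_notMem hl.1]
    · have hne : q.1 ≠ p.1 := fun h => hl.1 (h ▸ List.mem_map_of_mem hp)
      simp [pathCycle_cons, ih hl.2 hp, hne]

lemma l1Z_pathCycle {l : List (Γ.E × Bool)} (hl : (l.map Prod.fst).Nodup) :
    l1Z (Γ.pathCycle l) = l.length := by
  induction l with
  | nil => exact l1Z_zero
  | cons p l ih =>
    rw [List.map_cons, List.nodup_cons] at hl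
    rw [pathCycle_cons, l1Z_add_of_natAbs_add, ih hl.2, l1Z, sum_single_index rfl]
    · cases p.2 <;> simp [add_comm]
    · intro e
      by_cases he : e = p.1
      · simp [he, pathCycle_apply_of_notMem hl.1]
      · simp [Ne.symm he]

def flow (γ : Γ.E →₀ ℤ) (p : Γ.E × Bool) : ℤ := if p.2 then γ p.1 else -γ p.1

lemma flow_eq_zero_iff {γ : Γ.E →₀ ℤ} {p : Γ.E × Bool} : flow γ p = 0 ↔ γ p.1 = 0 := by
  obtain ⟨e, _ | _⟩ := p <;> simp [flow]

open Classical in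
lemma sum_flow_src_eq_neg_d1 (γ : Γ.E →₀ ℤ) (v : Γ.V) :
    ∑ p ∈ γ.support ×ˢ Finset.univ with Γ.src p = v, flow γ p = -Γ.d1 γ v := by
  rw [Finset.sum_filter, Finset.sum_product, d1, Finsupp.sum_apply, Finsupp.sum,
    ← Finset.sum_neg_distrib]
  refine Finset.sum_congr rfl fun e _ => ?_
  simp only [Fintype.sum_bool, flow, src, if_true, Bool.false_eq_true, if_false,
    Finsupp.smul_apply, Finsupp.sub_apply, single_apply, smul_eq_mul]
  split_ifs <;> ring

lemma exists_flow_pos_src_eq_tgt {γ : Γ.E →₀ ℤ} (hγ : Γ.IsCycle γ) {p : Γ.E × Bool}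
    (hp : 0 < flow γ p) : ∃ q, 0 < flow γ q ∧ Γ.src q = Γ.tgt p := by
  classical
  by_contra! hout
  have hzero := sum_flow_src_eq_neg_d1 γ (Γ.tgt p)
  rw [hγ, Finsupp.coe_zero, Pi.zero_apply, neg_zero] at hzero
  -- The flow out of `tgt p` sums to zero, and the reversal of `p` contributes negatively to it.
  refine hzero.not_lt (Finset.sum_neg' (fun q hq => not_lt.1 fun hq' =>
    hout q hq' (Finset.mem_filter.1 hq).2) ⟨(p.1, !p.2), ?_, ?_⟩)
  · have : γ p.1 ≠ 0 := fun h => hp.ne' (flow_eq_zero_iff.2 h)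
    obtain ⟨e, _ | _⟩ := p <;> simp_all [src, tgt]
  · obtain ⟨e, _ | _⟩ := p <;> simp_all [flow]

open Function in
lemma exists_isCircuit_of_forall_exists_src_eq_tgt {P : Set (Γ.E × Bool)} (hP : P.Finite)
    (hne : P.Nonempty) (hfst : P.InjOn Prod.fst)
    (hout : ∀ p ∈ P, ∃ q ∈ P, Γ.src q = Γ.tgt p) :
    ∃ l, Γ.IsCircuit l ∧ ∀ p ∈ l, p ∈ P := by
  set W := Γ.tgt '' P
  have : Finite W := (hP.image _).to_subtype
  have : Nonempty W := (hne.image _).to_subtype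
  have hW : ∀ v : W, ∃ q ∈ P, Γ.src q = v := by
    rintro ⟨_, p, hp, rfl⟩
    exact hout p hp
  choose out hout_mem hout_src using hW
  -- Follow the chosen outgoing edges around a periodic orbit of the vertices.
  let φ : W → W := fun v => ⟨Γ.tgt (out v), Set.mem_image_of_mem _ (hout_mem v)⟩
  obtain ⟨x, hx⟩ := exists_mem_periodicPts φ
  set n := minimalPeriod φ x
  let c : Fin n → Γ.E × Bool := fun i => out (φ^[i] x)
  have hsrc_inj : Injective (Γ.src ∘ c) := fun i j h =>
    Fin.ext (iterate_injOn_Iio_minimalPeriod i.2 j.2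
      (Subtype.ext (by simpa only [comp_apply, c, hout_src] using h)))
  refine ⟨List.ofFn c, ⟨⟨?_, fun i => ?_⟩, ?_, ?_⟩, fun p hp => ?_⟩
  · exact List.ofFn_eq_nil_iff.not.2 (minimalPeriod_pos_of_mem_periodicPts hx).ne'
  · simp only [List.get_ofFn, List.length_ofFn, c, hout_src, Fin.val_cast]
    change (φ (φ^[i] x) : Γ.V) = _
    rw [← iterate_succ_apply' φ, iterate_mod_minimalPeriod_eq]
  · rw [List.map_ofFn, List.nodup_ofFn]
    exact fun i j h => hsrc_inj.of_comp (hfst (hout_mem _) (hout_mem _) h)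
  · rw [List.map_ofFn, List.nodup_ofFn]
    exact hsrc_inj
  · obtain ⟨i, rfl⟩ := List.mem_ofFn.1 hp
    exact hout_mem _

lemma exists_isCircuit_flow_pos {γ : Γ.E →₀ ℤ} (hγ : Γ.IsCycle γ) (hne : γ ≠ 0) :
    ∃ l, Γ.IsCircuit l ∧ ∀ p ∈ l, 0 < flow γ p := by
  refine exists_isCircuit_of_forall_exists_src_eq_tgt (P := {p | 0 < flow γ p}) ?_ ?_ ?_
    fun p hp => exists_flow_pos_src_eq_tgt hγ hp
  · refine (γ.support ×ˢ (Finset.univ : Finset Bool)).finite_toSet.subset fun p hp => ?_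
    have : γ p.1 ≠ 0 := fun h => (Set.mem_ofPred.1 hp).ne' (flow_eq_zero_iff.2 h)
    simpa using this
  · obtain ⟨e, he⟩ := Finsupp.ne_iff.1 hne
    rcases he.lt_or_gt with h | h
    exacts [⟨(e, false), by simpa [flow] using h⟩, ⟨(e, true), by simpa [flow] using h⟩]
  · rintro ⟨e, _ | _⟩ hp ⟨e', _ | _⟩ hq (rfl : e = e') <;>
      simp_all [flow] <;> omega

lemma l1Z_sub_pathCycle_add_length {γ : Γ.E →₀ ℤ} {l : List (Γ.E × Bool)}
    (hl : (l.map Prod.fst).Nodup) (hflow : ∀ p ∈ l, 0 < flow γ p) :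
    l1Z (γ - Γ.pathCycle l) + l.length = l1Z γ := by
  rw [← l1Z_pathCycle hl, ← l1Z_add_of_natAbs_add, sub_add_cancel]
  intro e
  rw [sub_add_cancel]
  by_cases he : e ∈ l.map Prod.fst
  · obtain ⟨p, hp, rfl⟩ := List.mem_map.1 he
    have := hflow p hp
    rw [Finsupp.sub_apply, pathCycle_apply_of_mem hl hp]
    obtain ⟨e, _ | _⟩ := p <;> simp [flow] at this ⊢ <;> omega
  · simp [pathCycle_apply_of_notMem he]

lemma IsCycle.sub {a b : Γ.E →₀ ℤ} (ha : Γ.IsCycle a) (hb : Γ.IsCycle b) : Γ.IsCycle (a - b) := by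
  rw [IsCycle, d1_sub, ha, hb, sub_zero]

section Map

variable {σ : Γ.E → Γ.E} {τ : Γ.V → Γ.V}

lemma src_prodMap (hends : ∀ e, Γ.ends (σ e) = (τ (Γ.ends e).1, τ (Γ.ends e).2))
    (p : Γ.E × Bool) : Γ.src (Prod.map σ id p) = τ (Γ.src p) := by
  obtain ⟨e, _ | _⟩ := p <;> simp [src, hends]

lemma tgt_prodMap (hends : ∀ e, Γ.ends (σ e) = (τ (Γ.ends e).1, τ (Γ.ends e).2))
    (p : Γ.E × Bool) : Γ.tgt (Prod.map σ id p) = τ (Γ.tgt p) := by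
  obtain ⟨e, _ | _⟩ := p <;> simp [tgt, hends]

lemma IsCircuit.map (hσ : Function.Injective σ) (hτ : Function.Injective τ)
    (hends : ∀ e, Γ.ends (σ e) = (τ (Γ.ends e).1, τ (Γ.ends e).2))
    {l : List (Γ.E × Bool)} (hl : Γ.IsCircuit l) : Γ.IsCircuit (l.map (Prod.map σ id)) := by
  obtain ⟨⟨hne, hclosed⟩, hfst, hsrc⟩ := hl
  refine ⟨⟨by simpa using hne, fun i => ?_⟩, ?_, ?_⟩
  · have := hclosed ⟨i, by simpa using i.2⟩
    simp only [List.get_eq_getElem, List.getElem_map, List.length_map] at this ⊢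
    rw [src_prodMap hends, tgt_prodMap hends, this]
  · have : (l.map (Prod.map σ id)).map Prod.fst = (l.map Prod.fst).map σ := by
      simp [Function.comp_def]
    exact this ▸ hfst.map hσ
  · have : (l.map (Prod.map σ id)).map Γ.src = (l.map Γ.src).map τ := by
      simp [Function.comp_def, src_prodMap hends]
    exact this ▸ hsrc.map hτ

lemma pathCycle_map (l : List (Γ.E × Bool)) :
    Γ.pathCycle (l.map (Prod.map σ id)) = (Γ.pathCycle l).mapDomain σ := by
  induction l with
  | nil => simp [pathCycle]
  | cons p l ih => simp [pathCycle_cons, ih, mapDomain_add]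

end Map

end CGraph

namespace TwoComplex

variable {X : TwoComplex}

lemma d2_eq_linearCombination (μ : X.F →₀ ℤ) : X.d2 μ = linearCombination ℤ X.fb μ :=
  (linearCombination_apply ℤ μ).symm

lemma d2_add (a b : X.F →₀ ℤ) : X.d2 (a + b) = X.d2 a + X.d2 b := by
  simp only [d2_eq_linearCombination, map_add]

@[simp]
lemma d2_zero : X.d2 0 = 0 := by
  simp only [d2_eq_linearCombination, map_zero]

lemma _root_.Set.Finite.exists_filling_bound {C : Set (X.E →₀ ℤ)} (hC : C.Finite)
    (hfill : ∀ γ ∈ C, ∃ μ, X.d2 μ = γ) : ∃ N, ∀ γ ∈ C, ∃ μ, X.d2 μ = γ ∧ l1Z μ ≤ N := by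
  choose! μ hμ using hfill
  obtain ⟨N, hN⟩ := (hC.image fun γ => l1Z (μ γ)).bddAbove
  exact ⟨N, fun γ hγ => ⟨μ γ, hμ γ hγ, hN (Set.mem_image_of_mem _ hγ)⟩⟩

lemma exists_filling_le_mul_of_circuit_bound {k N : ℕ}
    (hN : ∀ l, X.IsCircuit l → l.length ≤ k → ∃ μ, X.d2 μ = X.pathCycle l ∧ l1Z μ ≤ N)
    {γ : X.E →₀ ℤ} (hγ : X.IsCycle γ) (hk : l1Z γ ≤ k) :
    ∃ μ, X.d2 μ = γ ∧ l1Z μ ≤ l1Z γ * N := by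
  induction hn : l1Z γ using Nat.strong_induction_on generalizing γ with
  | _ n ih =>
  by_cases h0 : γ = 0
  · exact ⟨0, by simp [h0], by simp⟩
  -- Peel off a circuit along which `γ` flows positively; this lowers `l1Z γ` by its length.
  obtain ⟨l, hl, hflow⟩ := CGraph.exists_isCircuit_flow_pos hγ h0
  have hlen := CGraph.l1Z_sub_pathCycle_add_length hl.2.1 hflow
  have hpos : 0 < l.length := List.length_pos_iff.2 hl.1.1
  obtain ⟨μ₁, hμ₁, hμ₁N⟩ := hN l hl (by omega)
  obtain ⟨μ₂, hμ₂, hμ₂N⟩ := ih _ (by omega) (hγ.sub (CGraph.isCycle_pathCycle hl.1))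
    (by omega) rfl
  refine ⟨μ₁ + μ₂, by rw [d2_add, hμ₁, hμ₂, add_sub_cancel], ?_⟩
  calc l1Z (μ₁ + μ₂) ≤ l1Z μ₁ + l1Z μ₂ := l1Z_add_le _ _
    _ ≤ N + l1Z (γ - X.pathCycle l) * N := add_le_add hμ₁N hμ₂N
    _ = (l1Z (γ - X.pathCycle l) + 1) * N := by ring
    _ ≤ n * N := Nat.mul_le_mul_right N (by omega)

lemma FV_le_of_forall_exists_filling {k M : ℕ}
    (h : ∀ γ, X.IsCycle γ → l1Z γ ≤ k → ∃ μ, X.d2 μ = γ ∧ l1Z μ ≤ M) : X.FV k ≤ M :=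
  iSup₂_le fun γ ⟨hγ, hk⟩ =>
    let ⟨μ, hμ, hM⟩ := h γ hγ hk
    (iInf₂_le μ hμ).trans (by exact_mod_cast hM)

end TwoComplex

namespace ComplexAction

variable {G : Type} [Group G] {X : TwoComplex} (A : ComplexAction G X)

lemma eMap_one_apply (e : X.E) : A.eMap 1 e = e :=
  (A.eMap 1).injective (by rw [← A.eMap_mul, one_mul])

lemma eMap_inv_apply_eMap (g : G) (e : X.E) : A.eMap g⁻¹ (A.eMap g e) = e := by
  rw [← A.eMap_mul, inv_mul_cancel, eMap_one_apply]

lemma d2_mapDomain_fMap (g : G) (μ : X.F →₀ ℤ) :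
    X.d2 (μ.mapDomain (A.fMap g)) = (X.d2 μ).mapDomain (A.eMap g) := by
  simp only [TwoComplex.d2_eq_linearCombination, linearCombination_mapDomain]
  rw [← lmapDomain_apply ℤ ℤ, apply_linearCombination]
  congr 1
  ext f
  simp [A.fb_eq]

lemma exists_filling_of_translate {g : G} {γ : X.E →₀ ℤ} {N : ℕ}
    (h : ∃ μ, X.d2 μ = γ.mapDomain (A.eMap g) ∧ l1Z μ ≤ N) :
    ∃ μ, X.d2 μ = γ ∧ l1Z μ ≤ N := by
  obtain ⟨μ, hμ, hN⟩ := h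
  refine ⟨μ.mapDomain (A.fMap g⁻¹), ?_, (l1Z_mapDomain (A.fMap g⁻¹).injective μ).trans_le hN⟩
  have hinv : A.eMap g⁻¹ ∘ A.eMap g = id := funext (A.eMap_inv_apply_eMap g)
  rw [d2_mapDomain_fMap, hμ, ← mapDomain_comp, hinv, mapDomain_id]

lemma exists_circuit_filling_bound (hfine : X.Fine) {s : Set X.E} (hs : s.Finite)
    (hrep : ∀ e, ∃ g, A.eMap g e ∈ s)
    (hH1 : ∀ γ : X.E →₀ ℤ, X.IsCycle γ → ∃ μ : X.F →₀ ℤ, X.d2 μ = γ) (k : ℕ) :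
    ∃ N, ∀ l, X.IsCircuit l → l.length ≤ k → ∃ μ, X.d2 μ = X.pathCycle l ∧ l1Z μ ≤ N := by
  set T := {l | X.IsCircuit l ∧ l.length ≤ k ∧ ∃ e ∈ s, e ∈ l.map Prod.fst}
  have hT : T.Finite := (hs.biUnion fun e _ => hfine e k).subset
    fun l ⟨hl, hlk, e, he, hel⟩ => Set.mem_biUnion he ⟨hl, hel, hlk⟩
  obtain ⟨N, hN⟩ := (hT.image X.pathCycle).exists_filling_bound <| by
    rintro _ ⟨l, hl, rfl⟩
    exact hH1 _ (CGraph.isCycle_pathCycle hl.1.1)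
  -- Cocompactness: every circuit can be translated so that it meets the finite set `s`.
  refine ⟨N, fun l hl hlk => ?_⟩
  obtain ⟨p, hp⟩ := List.exists_mem_of_ne_nil l hl.1.1
  obtain ⟨g, hg⟩ := hrep p.1
  have hlg : l.map (Prod.map (A.eMap g) id) ∈ T :=
    ⟨hl.map (A.eMap g).injective (A.vMap g).injective (A.ends_eq g), by simpa using hlk,
      _, hg, List.mem_map.2 ⟨_, List.mem_map_of_mem hp, rfl⟩⟩
  exact A.exists_filling_of_translate (hN _ ⟨_, hlg, CGraph.pathCycle_map l⟩)

end ComplexAction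

theorem FV_finite_of_fine_general (G : Type) [Group G] (X : TwoComplex)
    (A : ComplexAction G X) (hcc : A.Cocompact)
    (hH1 : ∀ γ : X.E →₀ ℤ, X.toCGraph.IsCycle γ → ∃ μ : X.F →₀ ℤ, X.d2 μ = γ)
    (hfine : X.toCGraph.Fine) :
    ∀ k : ℕ, X.FV k < ⊤ := by
  intro k
  obtain ⟨-, ⟨s, hs, hrep⟩, -⟩ := hcc
  obtain ⟨N, hN⟩ := A.exists_circuit_filling_bound hfine hs hrep hH1 k
  refine (X.FV_le_of_forall_exists_filling fun γ hγ hk => ?_).trans_lt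
    (ENat.natCast_lt_top (k * N))
  obtain ⟨μ, hμ, hle⟩ := TwoComplex.exists_filling_le_mul_of_circuit_bound hN hγ hk
  exact ⟨μ, hμ, hle.trans (Nat.mul_le_mul_right N hk)⟩

/-- A cocompact G-complex with trivial first homology over ℤ, fine
1-skeleton, and finite stabilizers of 1-cells has finite-valued homological Dehn
function over ℤ. -/
theorem FV_finite_of_fine (G : Type) [Group G] (X : TwoComplex)
    (hbd : ∀ f : X.F, X.toCGraph.d1 (X.fb f) = 0)
    (A : ComplexAction G X) (hcc : A.Cocompact)
    (hstab : ∀ e : X.E, {g : G | A.eMap g e = e}.Finite)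
    (hH1 : ∀ γ : X.E →₀ ℤ, X.toCGraph.IsCycle γ → ∃ μ : X.F →₀ ℤ, X.d2 μ = γ)
    (hfine : X.toCGraph.Fine) :
    ∀ k : ℕ, X.FV k < ⊤ :=
  FV_finite_of_fine_general G X A hcc hH1 hfine
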